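/- For every natural number n ≥ 1, the number of torsion pairs in the interval model I_{n-1} equals the number of 213-avoiding permutations of Fin n; in particular there is a bijection between torsion classes of type A_{n-1} and 213-avoiding permutations of n letters. -/

import Mathlib

/-- The interval model of type `A n`: pairs `(a, b)` with `1 ≤ a ≤ b ≤ n`. -/
def Ivl (n : ℕ) : Set (ℕ × ℕ) := {p | 1 ≤ p.1 ∧ p.1 ≤ p.2 ∧ p.2 ≤ n}

/-- `homA x y` encodes nonvanishing of `Hom` between the interval modules
`x = (a, b)` and `y = (c, d)`: it holds iff `c ≤ a ∧ a ≤ d ∧ d ≤ b`. -/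
def homA (x y : ℕ × ℕ) : Prop := y.1 ≤ x.1 ∧ x.1 ≤ y.2 ∧ y.2 ≤ x.2

/-- A torsion pair in the interval model `I n`: two subsets which are each other's
hom-orthogonal complements inside `I n`. -/
def IsTorsionPair (n : ℕ) (G F : Set (ℕ × ℕ)) : Prop :=
  G = {x ∈ Ivl n | ∀ y ∈ F, ¬ homA x y} ∧
  F = {y ∈ Ivl n | ∀ x ∈ G, ¬ homA x y}

/-- A torsion class is the first component of a torsion pair. -/
def IsTorsionClass (n : ℕ) (G : Set (ℕ × ℕ)) : Prop :=
  ∃ F, IsTorsionPair n G F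

/-- A permutation `σ` of `Fin n` is 213-avoiding if there are no indices
`i < j < k` with `σ j < σ i < σ k`. -/
def Avoids213 {n : ℕ} (σ : Equiv.Perm (Fin n)) : Prop :=
  ¬ ∃ i j k : Fin n, i < j ∧ j < k ∧ σ j < σ i ∧ σ i < σ k

namespace TPproof

open scoped Classical

/-- f-structures: the combinatorial hub. -/
def FS (m : ℕ) : Type :=
  {f : Fin m → Fin (m+1) // (∀ a : Fin m, (a : ℕ) ≤ (f a : ℕ)) ∧
    ∀ a b : Fin m, a < b → (b : ℕ) ≤ (f a : ℕ) → (f b : ℕ) ≤ (f a : ℕ)}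

def Gf {m : ℕ} (f : Fin m → Fin (m+1)) : Set (ℕ × ℕ) :=
  {q | ∃ a : Fin m, q.1 = (a : ℕ) + 1 ∧ (a : ℕ) + 1 ≤ q.2 ∧ q.2 ≤ (f a : ℕ)}

def perpF (m : ℕ) (G : Set (ℕ × ℕ)) : Set (ℕ × ℕ) :=
  {y ∈ Ivl m | ∀ x ∈ G, ¬ homA x y}

lemma fub {m : ℕ} (f : Fin m → Fin (m+1)) (a : Fin m) : (f a : ℕ) ≤ m :=
  Nat.lt_succ_iff.mp (f a).isLt

lemma isTorsionPair_Gf {m : ℕ} (f : FS m) :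
    IsTorsionPair m (Gf f.1) (perpF m (Gf f.1)) := by
  obtain ⟨f, hge, hC⟩ := f
  refine ⟨?_, rfl⟩
  ext x
  constructor
  · rintro ⟨a, hx1, hx2, hx3⟩
    refine ⟨⟨by omega, by omega, hx3.trans (fub f a)⟩, ?_⟩
    intro y hy
    exact hy.2 x ⟨a, hx1, hx2, hx3⟩
  · rintro ⟨⟨h1, hab, hbm⟩, hx⟩
    by_contra hxG
    have ham : x.1 - 1 < m := by omega
    set a' : Fin m := ⟨x.1 - 1, ham⟩ with ha'
    have ha1 : (a' : ℕ) + 1 = x.1 := by simp [ha']; omega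
    set φ := (f a' : ℕ) with hφ
    have hφge : x.1 - 1 ≤ φ := hge a'
    have hφm : φ ≤ m := fub f a'
    have hbφ : φ < x.2 := by
      by_contra h
      push_neg at h
      exact hxG ⟨a', ha1.symm, by omega, h⟩
    have hyF : ((x.1, φ + 1) : ℕ × ℕ) ∈ perpF m (Gf f) := by
      refine ⟨⟨h1, by omega, by omega⟩, ?_⟩
      rintro ⟨c, d⟩ ⟨c', hc1, hc2, hc3⟩ ⟨hh1, hh2, hh3⟩
      simp only at hc1 hc2 hc3 hh1 hh2 hh3
      have hac : (a' : ℕ) ≤ (c' : ℕ) := by omega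
      rcases eq_or_lt_of_le hac with heq | hlt
      · have : a' = c' := Fin.ext heq
        subst this
        omega
      · have hcb : (c' : ℕ) ≤ φ := by omega
        have := hC a' c' (Fin.lt_def.mpr hlt) hcb
        omega
    exact hx (x.1, φ + 1) hyF ⟨le_rfl, by omega, by omega⟩

lemma exists_fs {m : ℕ} {G F : Set (ℕ × ℕ)} (h : IsTorsionPair m G F) :
    ∃ f : FS m, Gf f.1 = G := by
  obtain ⟨hG, hF⟩ := h
  have hsub : G ⊆ Ivl m := by rw [hG]; exact fun x hx => hx.1
  have hquot : ∀ a b d : ℕ, (a, b) ∈ G → a ≤ d → d ≤ b → (a, d) ∈ G := by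
    intro a b d hab had hdb
    have habI := hsub hab
    obtain ⟨i1, i2, i3⟩ := habI
    rw [hG]
    refine ⟨⟨i1, had, by omega⟩, ?_⟩
    rintro ⟨c, e⟩ hy ⟨j1, j2, j3⟩
    rw [hG] at hab
    exact hab.2 (c, e) hy ⟨j1, j2, by simp only at j3 ⊢; omega⟩
  have bdd : ∀ a : ℕ, BddAbove {d | (a, d) ∈ G} :=
    fun a => ⟨m, fun d hd => (hsub hd).2.2⟩
  set φ : ℕ → ℕ := fun a => if (a, a) ∈ G then sSup {d | (a, d) ∈ G} else a - 1 with hφdef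
  have mem_iff : ∀ a d : ℕ, 1 ≤ a → ((a, d) ∈ G ↔ a ≤ d ∧ d ≤ φ a) := by
    intro a d ha
    constructor
    · intro h
      have hI := hsub h
      have haa : (a, a) ∈ G := hquot a d a h le_rfl hI.2.1
      refine ⟨hI.2.1, ?_⟩
      simp only [hφdef, if_pos haa]
      exact le_csSup (bdd a) h
    · rintro ⟨h1, h2⟩
      by_cases haa : (a, a) ∈ G
      · simp only [hφdef, if_pos haa] at h2
        have hne : Set.Nonempty {d | (a, d) ∈ G} := ⟨a, haa⟩
        have hsup : (a, sSup {d | (a, d) ∈ G}) ∈ G := Nat.sSup_mem hne (bdd a)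
        exact hquot a _ d hsup h1 h2
      · simp only [hφdef, if_neg haa] at h2
        omega
  have bounds : ∀ a : ℕ, 1 ≤ a → a ≤ m → a - 1 ≤ φ a ∧ φ a ≤ m := by
    intro a h1 h2
    by_cases haa : (a, a) ∈ G
    · have hmem : (a, φ a) ∈ G := by
        simp only [hφdef, if_pos haa]
        exact Nat.sSup_mem ⟨a, haa⟩ (bdd a)
      obtain ⟨i1, i2, i3⟩ := hsub hmem
      exact ⟨by omega, i3⟩
    · simp only [hφdef, if_neg haa]
      omega
  have hCnat : ∀ a b : ℕ, 1 ≤ a → a < b → b ≤ m → b ≤ φ a + 1 → φ b ≤ φ a := by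
    intro a b ha hab hbm hbφ
    by_contra hlt
    push_neg at hlt
    have hφa : a ≤ φ a := by omega
    have hGa : (a, φ a) ∈ G := (mem_iff a (φ a) ha).mpr ⟨hφa, le_rfl⟩
    have hGb : (b, φ b) ∈ G := (mem_iff b (φ b) (by omega)).mpr ⟨by omega, le_rfl⟩
    have hφbm : φ b ≤ m := (hsub hGb).2.2
    have hx : (a, φ b) ∈ G := by
      rw [hG]
      refine ⟨⟨ha, by omega, hφbm⟩, ?_⟩
      rintro ⟨c, e⟩ hyF ⟨j1, j2, j3⟩
      simp only at j1 j2 j3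
      rw [hF] at hyF
      obtain ⟨hyI, hy⟩ := hyF
      have h4 := hy (a, φ a) hGa
      have h5 : φ a < e := by
        by_contra hcon
        push_neg at hcon
        exact h4 ⟨j1, j2, hcon⟩
      exact hy (b, φ b) hGb ⟨by omega, by omega, j3⟩
    have := ((mem_iff a (φ b) ha).mp hx).2
    omega
  refine ⟨⟨fun a' => ⟨φ ((a' : ℕ) + 1), ?_⟩, ?_, ?_⟩, ?_⟩
  · have h1 := a'.isLt
    have h2 := bounds ((a' : ℕ) + 1) (by omega) (by omega)
    omega
  · intro a
    have h1 := a.isLt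
    have h2 : (a : ℕ) ≤ φ ((a : ℕ) + 1) := by
      have := (bounds ((a : ℕ) + 1) (by omega) (by omega)).1
      omega
    exact h2
  · intro a b hab hba
    simp only at hba ⊢
    have h1 := b.isLt
    have h2 : (a : ℕ) < (b : ℕ) := hab
    exact hCnat ((a : ℕ) + 1) ((b : ℕ) + 1) (by omega) (by omega) (by omega) (by omega)
  · ext ⟨a, d⟩
    constructor
    · rintro ⟨a', h1, h2, h3⟩
      simp only at h1 h2 h3
      subst h1
      exact (mem_iff _ d (by omega)).mpr ⟨h2, h3⟩
    · intro h
      have hI := hsub h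
      obtain ⟨i1, i2, i3⟩ := hI
      have ham : a - 1 < m := by omega
      have hmi := (mem_iff a d (by omega)).mp h
      have he : (a - 1) + 1 = a := by omega
      refine ⟨⟨a - 1, ham⟩, by simp only [Fin.val_mk]; omega, by simp only [Fin.val_mk]; omega, ?_⟩
      show d ≤ φ ((a - 1) + 1)
      rw [he]
      exact hmi.2

lemma Gf_inj {m : ℕ} : Function.Injective (fun f : FS m => Gf f.1) := by
  have key : ∀ f g : FS m, Gf f.1 = Gf g.1 → ∀ a, (f.1 a : ℕ) ≤ (g.1 a : ℕ) := by
    intro f g h a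
    rcases Nat.lt_or_ge (a : ℕ) (f.1 a : ℕ) with hlt | hge
    · have hmem : ((a : ℕ) + 1, (f.1 a : ℕ)) ∈ Gf f.1 := ⟨a, rfl, by omega, le_rfl⟩
      rw [h] at hmem
      obtain ⟨a', h1, h2, h3⟩ := hmem
      simp only at h1 h2 h3
      have : a' = a := Fin.ext (by omega)
      subst this
      exact h3
    · exact hge.trans (g.2.1 a)
  intro f g h
  apply Subtype.ext
  funext a
  exact Fin.ext (le_antisymm (key f g h a) (key g f h.symm a))

noncomputable def equivPairs (m : ℕ) :
    FS m ≃ {p : Set (ℕ × ℕ) × Set (ℕ × ℕ) // IsTorsionPair m p.1 p.2} := by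
  refine Equiv.ofBijective
    (fun f => ⟨(Gf f.1, perpF m (Gf f.1)), isTorsionPair_Gf f⟩) ⟨?_, ?_⟩
  · intro f g h
    apply Gf_inj
    simpa using congrArg (fun p => p.1.1) h
  · rintro ⟨⟨G, F⟩, hGF⟩
    obtain ⟨f, hf⟩ := exists_fs hGF
    refine ⟨f, ?_⟩
    apply Subtype.ext
    apply Prod.ext
    · exact hf
    · simp only
      rw [hf]
      exact (hGF.2).symm

noncomputable def equivClasses (m : ℕ) :
    FS m ≃ {G : Set (ℕ × ℕ) // IsTorsionClass m G} := by
  refine Equiv.ofBijective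
    (fun f => ⟨Gf f.1, perpF m (Gf f.1), isTorsionPair_Gf f⟩) ⟨?_, ?_⟩
  · intro f g h
    apply Gf_inj
    simpa using congrArg Subtype.val h
  · rintro ⟨G, F, hGF⟩
    obtain ⟨f, hf⟩ := exists_fs hGF
    exact ⟨f, Subtype.ext hf⟩



/-- Extension of `f` to all positions, with value `m` at the last position. -/
def fe {m : ℕ} (f : Fin m → Fin (m+1)) (p : Fin (m+1)) : ℕ :=
  if h : (p : ℕ) < m then (f ⟨p, h⟩ : ℕ) else m

/-- The linear order induced by an f-structure: `Rel u v` means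
"the value at position `u` is smaller than the value at position `v`". -/
def Rel {m : ℕ} (f : Fin m → Fin (m+1)) (u v : Fin (m+1)) : Prop :=
  (u < v ∧ (v : ℕ) ≤ fe f u) ∨ (v < u ∧ fe f v < (u : ℕ))

section RelProps

variable {m : ℕ} {f : Fin m → Fin (m+1)}

lemma fe_le (p : Fin (m+1)) : fe f p ≤ m := by
  unfold fe; split
  · exact fub f _
  · exact le_rfl

lemma fe_ge (hge : ∀ a : Fin m, (a : ℕ) ≤ (f a : ℕ)) (p : Fin (m+1)) :
    (p : ℕ) ≤ fe f p := by
  unfold fe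
  split
  next h => exact hge ⟨p, h⟩
  next _ => exact Nat.lt_succ_iff.mp p.isLt

lemma feC (hC : ∀ a b : Fin m, a < b → (b : ℕ) ≤ (f a : ℕ) → (f b : ℕ) ≤ (f a : ℕ))
    {p q : Fin (m+1)} (hpq : p < q) (hq : (q : ℕ) ≤ fe f p) : fe f q ≤ fe f p := by
  have hpq' : (p : ℕ) < (q : ℕ) := hpq
  by_cases hq' : (q : ℕ) < m
  · have hp' : (p : ℕ) < m := hpq'.trans hq'
    rw [fe, dif_pos hq']
    rw [fe, dif_pos hp'] at hq ⊢
    exact hC ⟨p, hp'⟩ ⟨q, hq'⟩ (by rw [Fin.mk_lt_mk]; exact hpq') hq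
  · have hqm : (q : ℕ) = m := by have := Nat.lt_succ_iff.mp q.isLt; omega
    rw [fe, dif_neg hq']
    omega

lemma Rel_irrefl (u : Fin (m+1)) : ¬ Rel f u u := by
  rintro (⟨h, -⟩ | ⟨h, -⟩) <;> exact lt_irrefl u h

lemma Rel_total {u v : Fin (m+1)} (h : u ≠ v) : Rel f u v ∨ Rel f v u := by
  rcases lt_or_gt_of_ne h with hlt | hlt
  · rcases le_or_gt (v : ℕ) (fe f u) with hle | hgt
    · exact Or.inl (Or.inl ⟨hlt, hle⟩)
    · exact Or.inr (Or.inr ⟨hlt, hgt⟩)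
  · rcases le_or_gt (u : ℕ) (fe f v) with hle | hgt
    · exact Or.inr (Or.inl ⟨hlt, hle⟩)
    · exact Or.inl (Or.inr ⟨hlt, hgt⟩)

lemma Rel_trans (hC : ∀ a b : Fin m, a < b → (b : ℕ) ≤ (f a : ℕ) → (f b : ℕ) ≤ (f a : ℕ))
    {x y z : Fin (m+1)} (h1 : Rel f x y) (h2 : Rel f y z) : Rel f x z := by
  rcases h1 with ⟨hxy, hy⟩ | ⟨hyx, hy⟩ <;> rcases h2 with ⟨hyz, hz⟩ | ⟨hzy, hz⟩
  · exact Or.inl ⟨hxy.trans hyz, hz.trans (feC hC hxy hy)⟩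
  · rcases lt_trichotomy x z with h | h | h
    · refine Or.inl ⟨h, ?_⟩
      have : (z : ℕ) < (y : ℕ) := hzy
      have : (y : ℕ) ≤ fe f x := hy
      omega
    · subst h
      exfalso
      have : (y : ℕ) ≤ fe f x := hy
      omega
    · refine Or.inr ⟨h, ?_⟩
      by_contra hcon
      push_neg at hcon
      have := feC hC h hcon
      have hyv : (y : ℕ) ≤ fe f x := hy
      omega
  · refine Or.inr ⟨?_, ?_⟩
    · have h1 : (z : ℕ) ≤ fe f y := hz
      have h2 : fe f y < (x : ℕ) := hy
      exact Fin.lt_def.mpr (by omega)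
    · have := feC hC hyz hz
      omega
  · refine Or.inr ⟨hzy.trans hyx, ?_⟩
    have h1 : (z : ℕ) < (y : ℕ) := hzy
    have h2 : (y : ℕ) < (x : ℕ) := hyx
    omega

end RelProps

noncomputable def rk {m : ℕ} (f : Fin m → Fin (m+1)) (u : Fin (m+1)) : ℕ :=
  (Finset.univ.filter (fun v => Rel f v u)).card

section RkProps

variable {m : ℕ} (f : FS m)

lemma rk_lt_of_Rel {u v : Fin (m+1)} (h : Rel f.1 u v) : rk f.1 u < rk f.1 v := by
  apply Finset.card_lt_card
  rw [Finset.ssubset_iff_of_subset]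
  · exact ⟨u, by simp [h], by simp [Rel_irrefl]⟩
  · intro w hw
    simp only [Finset.mem_filter, Finset.mem_univ, true_and] at hw ⊢
    exact Rel_trans f.2.2 hw h

lemma rk_iff {u v : Fin (m+1)} (h : u ≠ v) : Rel f.1 u v ↔ rk f.1 u < rk f.1 v := by
  constructor
  · exact rk_lt_of_Rel f
  · intro hlt
    rcases Rel_total h with h1 | h1
    · exact h1
    · exact absurd (rk_lt_of_Rel f h1) (by omega)

lemma rk_lt_card (u : Fin (m+1)) : rk f.1 u < m + 1 := by
  have hsub : Finset.univ.filter (fun v => Rel f.1 v u) ⊆ Finset.univ.erase u := by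
    intro w hw
    simp only [Finset.mem_filter, Finset.mem_univ, true_and] at hw
    apply Finset.mem_erase.mpr
    exact ⟨fun he => Rel_irrefl u (he ▸ hw), Finset.mem_univ w⟩
  have := Finset.card_le_card hsub
  rw [Finset.card_erase_of_mem (Finset.mem_univ u), Finset.card_univ, Fintype.card_fin] at this
  show (Finset.univ.filter (fun v => Rel f.1 v u)).card < m + 1
  omega

noncomputable def Psi : Equiv.Perm (Fin (m+1)) := by
  refine Equiv.ofBijective (fun u => (⟨rk f.1 u, rk_lt_card f u⟩ : Fin (m+1))) ?_
  apply Finite.injective_iff_bijective.mp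
  intro u v h
  by_contra hne
  have h' : rk f.1 u = rk f.1 v := by simpa [Fin.ext_iff] using h
  rcases Rel_total hne with h1 | h1
  · exact absurd (rk_lt_of_Rel f h1) (by omega)
  · exact absurd (rk_lt_of_Rel f h1) (by omega)

lemma Psi_apply (u : Fin (m+1)) : Psi f u = ⟨rk f.1 u, rk_lt_card f u⟩ := rfl

lemma Psi_lt_iff {u v : Fin (m+1)} (h : u ≠ v) : Psi f u < Psi f v ↔ Rel f.1 u v := by
  rw [Psi_apply, Psi_apply, Fin.lt_def]
  exact (rk_iff f h).symm

lemma Psi_avoids : Avoids213 (Psi f) := by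
  rintro ⟨i, j, k, hij, hjk, h1, h2⟩
  have hji : Rel f.1 j i := (Psi_lt_iff f (ne_of_gt hij)).mp h1
  have hik : Rel f.1 i k := (Psi_lt_iff f (ne_of_lt (hij.trans hjk))).mp h2
  rcases hji with ⟨h, -⟩ | ⟨-, h⟩
  · exact absurd hij (asymm h)
  · rcases hik with ⟨-, h'⟩ | ⟨h', -⟩
    · have hjk' : (j : ℕ) < (k : ℕ) := hjk
      omega
    · exact absurd (hij.trans hjk) (asymm h')

/-- Key: for `p < q`, position `q` carries a larger value than position `p`
iff `q ≤ f p`. -/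
lemma Psi_key (p : Fin m) (q : Fin (m+1)) (hpq : (p : ℕ) < (q : ℕ)) :
    (Psi f (Fin.castSucc p) < Psi f q ↔ (q : ℕ) ≤ (f.1 p : ℕ)) := by
  have hne : Fin.castSucc p ≠ q := by
    intro h
    rw [← h, Fin.coe_castSucc] at hpq
    exact lt_irrefl _ hpq
  rw [Psi_lt_iff f hne]
  have hlt : Fin.castSucc p < q := by
    rw [Fin.lt_def]
    simpa using hpq
  have hfe : fe f.1 (Fin.castSucc p) = (f.1 p : ℕ) := by
    rw [fe, dif_pos (by simpa using p.isLt)]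
    congr 1
  constructor
  · rintro (⟨-, h⟩ | ⟨h, -⟩)
    · rwa [hfe] at h
    · exact absurd hlt (asymm h)
  · intro h
    exact Or.inl ⟨hlt, by rwa [hfe]⟩

end RkProps

section Surj

variable {m : ℕ} (σ : Equiv.Perm (Fin (m+1))) (hσ : Avoids213 σ)

/-- The set of positions after `p` holding values bigger than the value at `p`. -/
noncomputable def bigSet (p : Fin m) : Finset ℕ :=
  (Finset.univ.filter (fun q : Fin (m+1) =>
    (p : ℕ) < (q : ℕ) ∧ σ (Fin.castSucc p) < σ q)).image Fin.val

noncomputable def fval (p : Fin m) : ℕ := (p : ℕ) + (bigSet σ p).card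

lemma mem_bigSet_iff (p : Fin m) (q : Fin (m+1)) :
    (q : ℕ) ∈ bigSet σ p ↔ (p : ℕ) < (q : ℕ) ∧ σ (Fin.castSucc p) < σ q := by
  constructor
  · intro h
    obtain ⟨q', hq', hval⟩ := Finset.mem_image.mp h
    have : q' = q := Fin.ext hval
    subst this
    simpa using hq'
  · intro h
    exact Finset.mem_image.mpr ⟨q, by simpa using h, rfl⟩

lemma bigSet_lt (p : Fin m) : ∀ x ∈ bigSet σ p, (p : ℕ) < x ∧ x ≤ m := by
  intro x hx
  obtain ⟨q, hq, hval⟩ := Finset.mem_image.mp hx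
  simp only [Finset.mem_filter, Finset.mem_univ, true_and] at hq
  subst hval
  exact ⟨hq.1, Nat.lt_succ_iff.mp q.isLt⟩

include hσ in
lemma bigSet_dc (p : Fin m) :
    ∀ x ∈ bigSet σ p, ∀ y, (p : ℕ) < y → y < x → y ∈ bigSet σ p := by
  intro x hx y hpy hyx
  obtain ⟨q, hq, hval⟩ := Finset.mem_image.mp hx
  simp only [Finset.mem_filter, Finset.mem_univ, true_and] at hq
  subst hval
  have hym : y < m + 1 := by have := q.isLt; omega
  set qy : Fin (m+1) := ⟨y, hym⟩ with hqy
  have hne : σ qy ≠ σ (Fin.castSucc p) := by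
    intro h
    have : qy = Fin.castSucc p := σ.injective h
    rw [Fin.ext_iff] at this
    simp [hqy] at this
    omega
  have hlt : σ (Fin.castSucc p) < σ qy := by
    rcases lt_or_gt_of_ne hne with h | h
    · exfalso
      exact hσ ⟨Fin.castSucc p, qy, q, by simp [Fin.lt_def, hqy]; omega,
        by simp [Fin.lt_def, hqy]; omega, h, hq.2⟩
    · exact h
  rw [show y = (qy : ℕ) from rfl]
  exact (mem_bigSet_iff σ p qy).mpr ⟨by simp [hqy]; omega, hlt⟩

include hσ in
lemma bigSet_eq_Ioc (p : Fin m) : bigSet σ p = Finset.Ioc (p : ℕ) (fval σ p) := by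
  have hsub : bigSet σ p ⊆ Finset.Ioc (p : ℕ) (fval σ p) := by
    intro x hx
    rw [Finset.mem_Ioc]
    refine ⟨(bigSet_lt σ p x hx).1, ?_⟩
    have hIoc : Finset.Ioc (p : ℕ) x ⊆ bigSet σ p := by
      intro y hy
      rw [Finset.mem_Ioc] at hy
      rcases eq_or_lt_of_le hy.2 with h | h
      · exact h ▸ hx
      · exact bigSet_dc σ hσ p x hx y hy.1 h
    have := Finset.card_le_card hIoc
    rw [Nat.card_Ioc] at this
    unfold fval
    omega
  apply Finset.eq_of_subset_of_card_le hsub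
  rw [Nat.card_Ioc]
  unfold fval
  omega

include hσ in
lemma fval_le (p : Fin m) : fval σ p ≤ m := by
  by_cases h : (bigSet σ p).card = 0
  · have := p.isLt
    unfold fval
    omega
  · have hmem : fval σ p ∈ bigSet σ p := by
      rw [bigSet_eq_Ioc σ hσ]
      rw [Finset.mem_Ioc]
      unfold fval
      omega
    exact (bigSet_lt σ p _ hmem).2

include hσ in
lemma key_iff (p : Fin m) (q : Fin (m+1)) (hpq : (p : ℕ) < (q : ℕ)) :
    σ (Fin.castSucc p) < σ q ↔ (q : ℕ) ≤ fval σ p := by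
  have h1 := mem_bigSet_iff σ p q
  rw [bigSet_eq_Ioc σ hσ, Finset.mem_Ioc] at h1
  exact ⟨fun h => (h1.mpr ⟨hpq, h⟩).2, fun h => (h1.mp ⟨hpq, h⟩).2⟩

include hσ in
lemma fval_C (p q : Fin m) (hpq : p < q) (hq : (q : ℕ) ≤ fval σ p) :
    fval σ q ≤ fval σ p := by
  by_contra hcon
  push_neg at hcon
  have hpq' : (p : ℕ) < (q : ℕ) := hpq
  set r : Fin (m+1) := ⟨fval σ q, Nat.lt_succ_of_le (fval_le σ hσ q)⟩ with hr
  have h1 : σ (Fin.castSucc p) < σ (Fin.castSucc q) := by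
    rw [key_iff σ hσ p (Fin.castSucc q) (by simpa using hpq')]
    simpa using hq
  have h2 : σ (Fin.castSucc q) < σ r := by
    rw [key_iff σ hσ q r (by simp [hr]; omega)]
  have h3 : ¬ σ (Fin.castSucc p) < σ r := by
    rw [key_iff σ hσ p r (by simp [hr]; omega)]
    simp [hr]
    omega
  exact h3 (h1.trans h2)

noncomputable def ofPerm : FS m :=
  ⟨fun p => ⟨fval σ p, Nat.lt_succ_of_le (fval_le σ hσ p)⟩,
   fun p => Nat.le_add_right _ _,
   fun p q hpq hq => fval_C σ hσ p q hpq hq⟩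

lemma card_lt_val (u : Fin (m+1)) :
    (Finset.univ.filter (fun v => σ v < σ u)).card = (σ u : ℕ) := by
  have himg : (Finset.univ.filter (fun v => σ v < σ u)).image σ = Finset.Iio (σ u) := by
    ext w
    simp only [Finset.mem_image, Finset.mem_filter, Finset.mem_univ, true_and,
      Finset.mem_Iio]
    constructor
    · rintro ⟨v, hv, rfl⟩; exact hv
    · intro hw; exact ⟨σ.symm w, by simpa using hw, by simp⟩
  have := Finset.card_image_of_injective
    (Finset.univ.filter (fun v => σ v < σ u)) σ.injective
  rw [himg] at this
  rw [← this, Fin.card_Iio]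

include hσ in
lemma Psi_ofPerm : Psi (ofPerm σ hσ) = σ := by
  have hfe : ∀ u : Fin (m+1), (u : ℕ) < m → ∀ q : Fin (m+1), (u : ℕ) < (q : ℕ) →
      ((q : ℕ) ≤ fe (ofPerm σ hσ).1 u ↔ σ u < σ q) := by
    intro u hu q hq
    have : fe (ofPerm σ hσ).1 u = fval σ ⟨u, hu⟩ := by
      rw [fe, dif_pos hu]
      rfl
    rw [this]
    have hcs : Fin.castSucc (⟨u, hu⟩ : Fin m) = u := Fin.ext (by simp)
    rw [← key_iff σ hσ ⟨u, hu⟩ q (by simpa using hq), hcs]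
  apply Equiv.ext
  intro u
  rw [Psi_apply]
  apply Fin.ext
  simp only
  rw [rk]
  have hset : Finset.univ.filter (fun v => Rel (ofPerm σ hσ).1 v u)
      = Finset.univ.filter (fun v => σ v < σ u) := by
    ext v
    simp only [Finset.mem_filter, Finset.mem_univ, true_and]
    rcases lt_trichotomy v u with hvu | hvu | hvu
    · have hvm : (v : ℕ) < m := by
        have h1 : (v : ℕ) < (u : ℕ) := hvu
        have h2 := Nat.lt_succ_iff.mp u.isLt
        omega
      rw [show Rel (ofPerm σ hσ).1 v u ↔ (u : ℕ) ≤ fe (ofPerm σ hσ).1 v from ?_]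
      · rw [hfe v hvm u hvu]
      · constructor
        · rintro (⟨-, h⟩ | ⟨h, -⟩)
          · exact h
          · exact absurd hvu (asymm h)
        · intro h; exact Or.inl ⟨hvu, h⟩
    · subst hvu
      simp [Rel_irrefl]
    · have hum : (u : ℕ) < m := by
        have h1 : (u : ℕ) < (v : ℕ) := hvu
        have h2 := Nat.lt_succ_iff.mp v.isLt
        omega
      have hrel : Rel (ofPerm σ hσ).1 v u ↔ fe (ofPerm σ hσ).1 u < (v : ℕ) := by
        constructor
        · rintro (⟨h, -⟩ | ⟨-, h⟩)
          · exact absurd hvu (asymm h)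
          · exact h
        · intro h; exact Or.inr ⟨hvu, h⟩
      rw [hrel]
      have hiff := hfe u hum v hvu
      constructor
      · intro h
        have h2 : ¬ σ u < σ v := by
          rw [← hiff]
          omega
        have hne : σ v ≠ σ u := fun he => (ne_of_gt hvu) (σ.injective he)
        exact lt_of_le_of_ne (le_of_not_gt h2) hne
      · intro h
        by_contra hc
        push_neg at hc
        exact absurd (hiff.mp hc) (asymm h)
  rw [hset, card_lt_val]

end Surj

section E3

variable {m : ℕ}

lemma Psi_inj : Function.Injective (fun f : FS m => Psi f) := by
  have key : ∀ f g : FS m, Psi f = Psi g → ∀ p : Fin m, (f.1 p : ℕ) ≤ (g.1 p : ℕ) := by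
    intro f g h p
    by_contra hcon
    push_neg at hcon
    have hgp : (p : ℕ) ≤ (g.1 p : ℕ) := g.2.1 p
    set q : Fin (m+1) := f.1 p with hq
    have hpq : (p : ℕ) < (q : ℕ) := by
      have := f.2.1 p
      omega
    have h1 : Psi f (Fin.castSucc p) < Psi f q := (Psi_key f p q hpq).mpr le_rfl
    rw [h] at h1
    have h2 : (q : ℕ) ≤ (g.1 p : ℕ) := (Psi_key g p q hpq).mp h1
    omega
  intro f g h
  apply Subtype.ext
  funext p
  exact Fin.ext (le_antisymm (key f g h p) (key g f h.symm p))

noncomputable def equivAvoids (m : ℕ) :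
    FS m ≃ {σ : Equiv.Perm (Fin (m+1)) // Avoids213 σ} := by
  refine Equiv.ofBijective (fun f => ⟨Psi f, Psi_avoids f⟩) ⟨?_, ?_⟩
  · intro f g h
    exact Psi_inj (by simpa using congrArg Subtype.val h)
  · rintro ⟨σ, hσ⟩
    exact ⟨ofPerm σ hσ, Subtype.ext (Psi_ofPerm σ hσ)⟩

end E3

end TPproof

/-- The number of torsion pairs in the interval model `I (n-1)` equals the number of
213-avoiding permutations of `Fin n`; in particular, there is a bijection between
torsion classes of type `A (n-1)` and 213-avoiding permutations of `n` letters. -/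
theorem card_torsionPairs_eq_card_avoids213 (n : ℕ) (hn : 1 ≤ n) :
    Nat.card {p : Set (ℕ × ℕ) × Set (ℕ × ℕ) // IsTorsionPair (n - 1) p.1 p.2} =
      Nat.card {σ : Equiv.Perm (Fin n) // Avoids213 σ} ∧
    Nonempty ({G : Set (ℕ × ℕ) // IsTorsionClass (n - 1) G} ≃
      {σ : Equiv.Perm (Fin n) // Avoids213 σ}) := by
  obtain ⟨m, rfl⟩ : ∃ m, n = m + 1 := ⟨n - 1, by omega⟩
  simp only [Nat.add_sub_cancel]
  constructor
  · exact Nat.card_congr ((TPproof.equivPairs m).symm.trans (TPproof.equivAvoids m))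
  · exact ⟨(TPproof.equivClasses m).symm.trans (TPproof.equivAvoids m)⟩
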